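/- arXiv:2207.04462 — 2 statements merged into one kernel-verified Lean document; each statement's English description precedes it below -/
import Mathlib

section
/- Let X be a reflexive real Banach space and A : X → X* be a uniformly monotone operator, i.e. (A(u) − A(v), u − v) ≥ c‖u − v‖^p for some c > 0, p > 1, and all u, v ∈ X. If A is also coercive and hemicontinuous, then A is bijective and A^{-1} : X* → X is continuous. -/
/-!
Galerkin's method. On a finite-dimensional space a monotone hemicontinuous operator is locally
bounded, and Minty's trick identifies the limits of its values, so it is continuous. A continuous
uniformly monotone operator on `E × ℝ` is surjective once this holds on `E`: the last component of
the equation is solved by the intermediate value theorem, the solution `τ x` depends continuously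
on `x` by uniform monotonicity, and what remains is a uniformly monotone equation on `E`; induction
on the dimension covers every finite-dimensional space.

Restricting `A` to the spans of finite sets gives Galerkin solutions, bounded by coercivity. By
reflexivity and Banach–Alaoglu they converge weakly along an ultrafilter to some `u₀`, and
monotonicity passes to the limit in the form `0 ≤ (f - A v) (u₀ - v)`, which by Minty's trick
means `A u₀ = f`. Finally `c ‖u - v‖ ^ (p - 1) ≤ ‖A u - A v‖` gives injectivity and Hölder
continuity of the inverse.
-/

open Filter NormedSpace

open Function Topology

section Operators

variable {E F : Type*} [NormedAddCommGroup E] [NormedSpace ℝ E]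
  [NormedAddCommGroup F] [NormedSpace ℝ F]

def IsMonotoneOperator (A : E → E →L[ℝ] ℝ) : Prop :=
  ∀ u v, 0 ≤ (A u - A v) (u - v)

def IsUniformlyMonotone (A : E → E →L[ℝ] ℝ) (c p : ℝ) : Prop :=
  ∀ u v, c * ‖u - v‖ ^ p ≤ (A u - A v) (u - v)

def IsHemicontinuous (A : E → E →L[ℝ] ℝ) : Prop :=
  ∀ u v w, ContinuousOn (fun t : ℝ => A (u + t • v) w) (Set.Icc 0 1)

variable {A : E → E →L[ℝ] ℝ} {c p : ℝ}

theorem IsUniformlyMonotone.isMonotoneOperator (hA : IsUniformlyMonotone A c p) (hc : 0 ≤ c) :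
    IsMonotoneOperator A :=
  fun u v => (by positivity : 0 ≤ c * ‖u - v‖ ^ p).trans (hA u v)

theorem IsUniformlyMonotone.comp (hA : IsUniformlyMonotone A c p) (hc : 0 ≤ c) (hp : 0 ≤ p)
    (a : E) (L : F →L[ℝ] E) {K : ℝ} (hK : 0 ≤ K) (hL : ∀ y, K * ‖y‖ ≤ ‖L y‖) :
    IsUniformlyMonotone (fun y => (A (a + L y)).comp L) (c * K ^ p) p := by
  intro y y'
  calc c * K ^ p * ‖y - y'‖ ^ p = c * (K * ‖y - y'‖) ^ p := by
        rw [Real.mul_rpow hK (norm_nonneg _), mul_assoc]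
    _ ≤ c * ‖(a + L y) - (a + L y')‖ ^ p := by
        rw [add_sub_add_left_eq_sub, ← map_sub]
        gcongr
        exact hL _
    _ ≤ _ := (hA _ _).trans_eq (by simp)

theorem IsHemicontinuous.comp (hA : IsHemicontinuous A) (a : E) (L : F →L[ℝ] E) :
    IsHemicontinuous fun y => (A (a + L y)).comp L :=
  fun u v w => by simpa [add_assoc] using hA (a + L u) (L v) (L w)

theorem IsHemicontinuous.continuous_apply_add_smul (hA : IsHemicontinuous A) (u v w : E) :
    Continuous fun t : ℝ => A (u + t • v) w := by
  refine continuous_iff_continuousAt.2 fun t₀ => ?_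
  have hmid : ContinuousAt (fun s : ℝ => A ((u + (t₀ - 1) • v) + s • (2 : ℝ) • v) w) (1 / 2) :=
    (hA _ _ w).continuousAt (Icc_mem_nhds (by norm_num) (by norm_num))
  have hline : (fun t : ℝ => A (u + t • v) w) =
      (fun s : ℝ => A ((u + (t₀ - 1) • v) + s • (2 : ℝ) • v) w) ∘ fun t => (t - t₀ + 1) / 2 := by
    funext t
    simp only [comp_apply]
    congr 2
    module
  rw [hline]
  exact hmid.comp_of_eq (by fun_prop) (by ring)

theorem mul_rpow_sub_one_le {a d : ℝ} (hd : 0 < d) (h : c * d ^ p ≤ a * d) :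
    c * d ^ (p - 1) ≤ a := by
  rwa [Real.rpow_sub hd, Real.rpow_one, mul_div_assoc', div_le_iff₀ hd]

theorem IsUniformlyMonotone.mul_norm_sub_rpow_le (hA : IsUniformlyMonotone A c p) (hp : 1 < p)
    (u v : E) : c * ‖u - v‖ ^ (p - 1) ≤ ‖A u - A v‖ := by
  rcases eq_or_ne u v with rfl | huv
  · simp [Real.zero_rpow (by linarith : p - 1 ≠ 0)]
  · exact mul_rpow_sub_one_le (norm_pos_iff.2 (sub_ne_zero.2 huv))
      ((hA u v).trans ((Real.le_norm_self _).trans ((A u - A v).le_opNorm _)))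

theorem IsUniformlyMonotone.injective (hA : IsUniformlyMonotone A c p) (hc : 0 < c) :
    Injective A := by
  intro u v huv
  by_contra hne
  have hpos := mul_pos hc (Real.rpow_pos_of_pos (norm_pos_iff.2 (sub_ne_zero.2 hne)) p)
  have h := hA u v
  simp only [huv, sub_self, zero_apply] at h
  linarith

theorem tendsto_of_mul_dist_rpow_le {α β γ : Type*} [PseudoMetricSpace β] [PseudoMetricSpace γ]
    {l : Filter α} {f : α → β} {g : α → γ} {y : β} {b : γ} {r : ℝ} (hc : 0 < c) (hr : 0 < r)
    (hg : Tendsto g l (𝓝 b)) (h : ∀ a, c * dist (f a) y ^ r ≤ dist (g a) b) :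
    Tendsto f l (𝓝 y) := by
  rw [tendsto_iff_dist_tendsto_zero] at hg ⊢
  have hlim : Tendsto (fun a => (dist (g a) b / c) ^ r⁻¹) l (𝓝 0) := by
    simpa [Real.zero_rpow (inv_ne_zero hr.ne')] using
      (hg.div_const c).rpow_const (Or.inr (inv_nonneg.2 hr.le))
  refine squeeze_zero (fun _ => dist_nonneg) (fun a => ?_) hlim
  rw [Real.le_rpow_inv_iff_of_pos dist_nonneg (by positivity) hr, le_div_iff₀' hc]
  exact h a

theorem IsUniformlyMonotone.continuous_invFun (hA : IsUniformlyMonotone A c p) (hc : 0 < c)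
    (hp : 1 < p) (hsurj : Surjective A) : Continuous (invFun A) :=
  continuous_iff_continuousAt.2 fun f =>
    tendsto_of_mul_dist_rpow_le hc (sub_pos.2 hp) tendsto_id fun g => by
      simpa only [id, dist_eq_norm, rightInverse_invFun hsurj g, rightInverse_invFun hsurj f] using
        hA.mul_norm_sub_rpow_le hp (invFun A g) (invFun A f)

/-- Minty's trick. -/
theorem IsHemicontinuous.eq_of_forall_nonneg (hA : IsHemicontinuous A) {u : E}
    {f : E →L[ℝ] ℝ} (h : ∀ v, 0 ≤ (f - A v) (u - v)) : A u = f := by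
  have hle : ∀ w, f w - A u w ≤ 0 := by
    intro w
    have hψ : Continuous fun t : ℝ => f w - A (u + t • w) w :=
      continuous_const.sub (hA.continuous_apply_add_smul u w w)
    have hpos : ∀ t ∈ Set.Ioi (0 : ℝ), f w - A (u + t • w) w ≤ 0 := by
      intro t ht
      have := h (u + t • w)
      rw [sub_add_cancel_left, map_neg, map_smul, smul_eq_mul] at this
      simp only [sub_apply] at this
      nlinarith [Set.mem_Ioi.1 ht]
    simpa using le_of_tendsto ((hψ.tendsto 0).mono_left nhdsWithin_le_nhds)
      (eventually_nhdsWithin_of_forall hpos)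
  ext w
  have h1 := hle w
  have h2 := hle (-w)
  simp only [map_neg] at h2
  linarith

theorem IsMonotoneOperator.apply_sub_nonneg_of_tendsto (hA : IsMonotoneOperator A) {α : Type*}
    {l : Filter α} [l.NeBot] {x : α → E} {s : α → ℝ} {u : E} {φ : E →L[ℝ] ℝ} {σ : ℝ}
    (hs : ∀ a, 0 ≤ s a) (hx : Tendsto x l (𝓝 u)) (hσ : Tendsto s l (𝓝 σ))
    (hφ : Tendsto (fun a => s a • A (x a)) l (𝓝 φ)) (v : E) :
    0 ≤ (φ - σ • A v) (u - v) := by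
  have hlim : Tendsto (fun a => (s a • A (x a) - s a • A v) (x a - v)) l
      (𝓝 ((φ - σ • A v) (u - v))) :=
    (isBoundedBilinearMap_apply.continuous.tendsto _).comp
      ((hφ.sub (hσ.smul_const _)).prodMk_nhds (hx.sub_const v))
  refine ge_of_tendsto hlim (Eventually.of_forall fun a => ?_)
  rw [← smul_sub (s a) (A (x a)) (A v), smul_apply, smul_eq_mul]
  exact mul_nonneg (hs a) (hA _ _)

theorem IsMonotoneOperator.eq_of_tendsto (hA : IsMonotoneOperator A) (hA' : IsHemicontinuous A)
    {α : Type*} {l : Filter α} [l.NeBot] {x : α → E} {u : E} {φ : E →L[ℝ] ℝ}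
    (hx : Tendsto x l (𝓝 u)) (hφ : Tendsto (fun a => A (x a)) l (𝓝 φ)) : A u = φ :=
  hA'.eq_of_forall_nonneg fun v => by
    simpa using hA.apply_sub_nonneg_of_tendsto (s := fun _ => 1) (fun _ => zero_le_one) hx
      tendsto_const_nhds (by simpa using hφ) v

theorem IsMonotoneOperator.exists_frequently_norm_le [FiniteDimensional ℝ E]
    (hA : IsMonotoneOperator A) {x : ℕ → E} {u : E} (hx : Tendsto x atTop (𝓝 u)) :
    ∃ M, ∃ᶠ k in atTop, ‖A (x k)‖ ≤ M := by
  by_contra! hM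
  have hinf : Tendsto (fun k => ‖A (x k)‖) atTop atTop :=
    tendsto_atTop.2 fun M => (hM M).mono fun _ h => h.le
  obtain ⟨φ, -, ns, hns, hφ⟩ := tendsto_subseq_of_bounded
    (Metric.isBounded_closedBall (x := (0 : E →L[ℝ] ℝ)) (r := 1))
    (x := fun k => ‖A (x k)‖⁻¹ • A (x k)) fun k => by
      simpa [norm_smul] using inv_mul_le_one_of_le₀ le_rfl (norm_nonneg _)
  have hinf' := hinf.comp hns.tendsto_atTop
  have hnorm : ‖φ‖ = 1 := by
    refine tendsto_nhds_unique hφ.norm (tendsto_const_nhds.congr' ?_)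
    filter_upwards [hinf'.eventually_gt_atTop 0] with k hk
    simp only [comp_apply] at hk
    simp [norm_smul, inv_mul_cancel₀ hk.ne']
  -- the normalised values accumulate at a unit functional that is nonnegative on every `u - v`
  have hzero : φ = 0 := by
    have key : ∀ v, 0 ≤ φ (u - v) := fun v => by
      simpa using hA.apply_sub_nonneg_of_tendsto (fun _ => inv_nonneg.2 (norm_nonneg _))
        (hx.comp hns.tendsto_atTop) (tendsto_inv_atTop_zero.comp hinf') hφ v
    ext w
    have h1 := key (u - w)
    have h2 := key (u + w)
    simp only [sub_sub_cancel, sub_add_cancel_left, map_neg] at h1 h2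
    simp only [zero_apply]
    linarith
  simp [hzero] at hnorm

theorem IsMonotoneOperator.continuous [FiniteDimensional ℝ E] (hA : IsMonotoneOperator A)
    (hA' : IsHemicontinuous A) : Continuous A := by
  refine continuous_iff_seqContinuous.2 fun x u hx => tendsto_of_subseq_tendsto fun ns hns => ?_
  have hxn : Tendsto (x ∘ ns) atTop (𝓝 u) := hx.comp hns
  obtain ⟨M, hM⟩ := hA.exists_frequently_norm_le hxn
  obtain ⟨φ, -, ms, hms, hφ⟩ := tendsto_subseq_of_frequently_bounded
    (Metric.isBounded_closedBall (x := (0 : E →L[ℝ] ℝ)) (r := M))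
    (x := fun k => A (x (ns k))) (hM.mono fun k hk => mem_closedBall_zero_iff.2 hk)
  refine ⟨ms, ?_⟩
  rwa [hA.eq_of_tendsto hA' (hxn.comp hms.tendsto_atTop) hφ]

def UniformlyMonotoneSurjective (E : Type*) [NormedAddCommGroup E] [NormedSpace ℝ E] : Prop :=
  ∀ (B : E → E →L[ℝ] ℝ) (c p : ℝ), 0 < c → 1 < p → Continuous B → IsUniformlyMonotone B c p →
    Surjective B

theorem UniformlyMonotoneSurjective.of_subsingleton [Subsingleton E] :
    UniformlyMonotoneSurjective E :=
  fun _ _ _ _ _ _ _ _ => ⟨0, Subsingleton.elim _ _⟩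

theorem UniformlyMonotoneSurjective.of_equiv (e : E ≃L[ℝ] F)
    (hF : UniformlyMonotoneSurjective F) : UniformlyMonotoneSurjective E := by
  intro B c p hc hp hB hmono f
  obtain ⟨C, hC, hbound⟩ := (e : E →L[ℝ] F).bound
  have hL : ∀ y, C⁻¹ * ‖y‖ ≤ ‖e.symm y‖ := fun y => by
    rw [inv_mul_le_iff₀ hC]
    simpa using hbound (e.symm y)
  obtain ⟨y, hy⟩ := hF (fun y => (B (e.symm y)).comp (e.symm : F →L[ℝ] E)) (c * C⁻¹ ^ p) p
    (by positivity) hp ((hB.comp e.symm.continuous).clm_comp continuous_const)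
    (by simpa using hmono.comp hc.le (by linarith) 0 (e.symm : F →L[ℝ] E) (by positivity) hL)
    (f.comp (e.symm : F →L[ℝ] E))
  refine ⟨e.symm y, ContinuousLinearMap.ext fun x => ?_⟩
  simpa using DFunLike.congr_fun hy (e x)

theorem uniformlyMonotoneSurjective_real : UniformlyMonotoneSurjective ℝ := by
  intro B c p hc hp hB hmono f
  have happly : ∀ (φ : ℝ →L[ℝ] ℝ) (t : ℝ), φ t = φ 1 * t := fun φ t => by
    simpa [mul_comm] using φ.map_smul t 1
  have hgrowth : ∀ s t, s < t → B s 1 + c * (t - s) ^ (p - 1) ≤ B t 1 := by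
    intro s t hst
    have h := hmono t s
    rw [happly, Real.norm_of_nonneg (sub_pos.2 hst).le] at h
    have := mul_rpow_sub_one_le (sub_pos.2 hst) (by simpa using h)
    linarith
  have hlarge := ((tendsto_rpow_atTop (sub_pos.2 hp)).const_mul_atTop hc).eventually_ge_atTop
    |f 1 - B 0 1|
  obtain ⟨T, hT, hT0⟩ := (hlarge.and (eventually_gt_atTop 0)).exists
  have hup := hgrowth 0 T hT0
  have hlo := hgrowth (-T) 0 (by linarith)
  simp only [sub_zero, zero_sub, neg_neg] at hup hlo
  have hmem : f 1 ∈ Set.Icc (B (-T) 1) (B T 1) :=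
    ⟨by linarith [neg_abs_le (f 1 - B 0 1)], by linarith [le_abs_self (f 1 - B 0 1)]⟩
  obtain ⟨t, ht⟩ := intermediate_value_univ (-T) T (hB.clm_apply continuous_const) hmem
  exact ⟨t, ContinuousLinearMap.ext_ring ht⟩

theorem UniformlyMonotoneSurjective.prod (hE : UniformlyMonotoneSurjective E) :
    UniformlyMonotoneSurjective (E × ℝ) := by
  intro B c p hc hp hB hmono f
  let inl := ContinuousLinearMap.inl ℝ E ℝ
  let inr := ContinuousLinearMap.inr ℝ E ℝ
  have hline : ∀ x, IsUniformlyMonotone (fun t => (B (x, t)).comp inr) c p := fun x => by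
    simpa [inr] using hmono.comp hc.le (by linarith) (x, 0) inr zero_le_one (by simp [inr])
  have hline_cont : ∀ x, Continuous fun t => (B (x, t)).comp inr := fun x =>
    (hB.comp (continuous_const.prodMk continuous_id)).clm_comp continuous_const
  choose τ hτ using fun x =>
    uniformlyMonotoneSurjective_real _ c p hc hp (hline_cont x) (hline x) (f.comp inr)
  replace hτ : ∀ x, (B (x, τ x)).comp inr = f.comp inr := hτ
  have hτ_cont : Continuous τ := continuous_iff_continuousAt.2 fun x₀ =>
    tendsto_of_mul_dist_rpow_le (g := fun x => (B (x, τ x₀)).comp inr) hc (sub_pos.2 hp)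
      (((hB.comp (continuous_id.prodMk continuous_const)).clm_comp continuous_const).tendsto x₀)
      fun x => by
        have := (hline x).mul_norm_sub_rpow_le hp (τ x) (τ x₀)
        rw [hτ x, ← hτ x₀, ← dist_eq_norm, ← dist_eq_norm] at this
        exact this.trans_eq (dist_comm _ _)
  -- on the graph of `τ` the last component of the equation holds; it remains to solve on `E`
  let C : E → E →L[ℝ] ℝ := fun x => (B (x, τ x)).comp inl
  have hC : IsUniformlyMonotone C c p := by
    intro x y
    have hsplit : (x, τ x) - (y, τ y) = inl (x - y) + inr (τ x - τ y) := by ext <;> simp [inl, inr]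
    have hlast : (B (x, τ x) - B (y, τ y)) (inr (τ x - τ y)) = 0 := by
      have hx := DFunLike.congr_fun (hτ x) (τ x - τ y)
      have hy := DFunLike.congr_fun (hτ y) (τ x - τ y)
      rw [ContinuousLinearMap.comp_apply] at hx hy
      rw [sub_apply, hx, hy, sub_self]
    calc c * ‖x - y‖ ^ p ≤ c * ‖(x, τ x) - (y, τ y)‖ ^ p := by
          gcongr
          exact norm_fst_le ((x, τ x) - (y, τ y))
      _ ≤ (B (x, τ x) - B (y, τ y)) ((x, τ x) - (y, τ y)) := hmono _ _
      _ = (C x - C y) (x - y) := by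
          rw [hsplit, map_add, hlast, add_zero]
          rfl
  obtain ⟨x, hx⟩ :=
    hE C c p hc hp ((hB.comp (continuous_id.prodMk hτ_cont)).clm_comp continuous_const) hC
      (f.comp inl)
  exact ⟨(x, τ x), ContinuousLinearMap.prod_ext hx (hτ x)⟩

theorem uniformlyMonotoneSurjective_pi : ∀ n : ℕ, UniformlyMonotoneSurjective (Fin n → ℝ)
  | 0 => .of_subsingleton
  | n + 1 => (uniformlyMonotoneSurjective_pi n).prod.of_equiv
      (ContinuousLinearEquiv.ofFinrankEq (by simp))

theorem UniformlyMonotoneSurjective.of_finiteDimensional [FiniteDimensional ℝ E] :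
    UniformlyMonotoneSurjective E :=
  (uniformlyMonotoneSurjective_pi _).of_equiv
    (ContinuousLinearEquiv.ofFinrankEq (by simp) : E ≃L[ℝ] (Fin (Module.finrank ℝ E) → ℝ))

theorem IsUniformlyMonotone.exists_galerkin (hA : IsUniformlyMonotone A c p)
    (hA' : IsHemicontinuous A) (hc : 0 < c) (hp : 1 < p) (V : Submodule ℝ E)
    [FiniteDimensional ℝ V] (f : E →L[ℝ] ℝ) : ∃ u ∈ V, ∀ v ∈ V, A u v = f v := by
  have hB : IsUniformlyMonotone (fun y : V => (A y).comp V.subtypeL) c p := by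
    simpa using hA.comp hc.le (by linarith) 0 V.subtypeL zero_le_one fun y => by simp
  have hB' : IsHemicontinuous fun y : V => (A y).comp V.subtypeL := by
    simpa using hA'.comp 0 V.subtypeL
  obtain ⟨u, hu⟩ := UniformlyMonotoneSurjective.of_finiteDimensional _ c p hc hp
    ((hB.isMonotoneOperator hc.le).continuous hB') hB (f.comp V.subtypeL)
  exact ⟨u, u.2, fun v hv => DFunLike.congr_fun hu ⟨v, hv⟩⟩

theorem exists_norm_le_of_tendsto_apply_self_div_norm
    (hA : Tendsto (fun u => A u u / ‖u‖) (comap norm atTop) atTop) (f : E →L[ℝ] ℝ) :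
    ∃ R, ∀ u, A u u ≤ f u → ‖u‖ ≤ R := by
  have h := (hA.eventually_gt_atTop ‖f‖).and (tendsto_comap.eventually (eventually_gt_atTop 0))
  obtain ⟨R, hR⟩ := eventually_atTop.1 (eventually_comap.1 h)
  refine ⟨R, fun u hu => le_of_not_gt fun hRu => ?_⟩
  obtain ⟨h1, h2⟩ := hR ‖u‖ hRu.le u rfl
  rw [lt_div_iff₀ h2] at h1
  linarith [(Real.le_norm_self (f u)).trans (f.le_opNorm u)]

theorem exists_forall_tendsto_apply_of_surjective_inclusionInDoubleDual
    (hrefl : Surjective (inclusionInDoubleDual ℝ E)) {ι : Type*} (𝒰 : Ultrafilter ι)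
    {u : ι → E} {R : ℝ} (hu : ∀ i, ‖u i‖ ≤ R) :
    ∃ u₀ : E, ∀ φ : E →L[ℝ] ℝ, Tendsto (fun i => φ (u i)) 𝒰 (𝓝 (φ u₀)) := by
  let J : ι → WeakDual ℝ (StrongDual ℝ E) := fun i =>
    StrongDual.toWeakDual (inclusionInDoubleDual ℝ E (u i))
  have hJ : ∀ i, J i ∈ WeakDual.toStrongDual ⁻¹' Metric.closedBall 0 R := fun i => by
    change dist (inclusionInDoubleDual ℝ E (u i)) 0 ≤ R
    exact (dist_zero_right (inclusionInDoubleDual ℝ E (u i))).le.trans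
      ((double_dual_bound ℝ E (u i)).trans (hu i))
  obtain ⟨ξ, -, hξ⟩ := (WeakDual.isCompact_closedBall 0 R).ultrafilter_le_nhds (𝒰.map J)
    (le_principal_iff.2 (mem_map.2 (univ_mem' hJ)))
  obtain ⟨u₀, hu₀⟩ := hrefl (WeakDual.toStrongDual ξ)
  refine ⟨u₀, fun φ => ?_⟩
  have hξφ : topDualPairing ℝ (StrongDual ℝ E) ξ φ = φ u₀ := (DFunLike.congr_fun hu₀ φ).symm
  rw [← hξφ]
  exact tendsto_iff_forall_eval_tendsto_topDualPairing.1 hξ φ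

theorem IsUniformlyMonotone.surjective (hrefl : Surjective (inclusionInDoubleDual ℝ E))
    (hA : IsUniformlyMonotone A c p) (hA' : IsHemicontinuous A) (hc : 0 < c) (hp : 1 < p)
    (hcoer : Tendsto (fun u => A u u / ‖u‖) (comap norm atTop) atTop) : Surjective A := by
  intro f
  obtain ⟨R, hR⟩ := exists_norm_le_of_tendsto_apply_self_div_norm hcoer f
  choose u huV hu using fun s : Finset E =>
    hA.exists_galerkin hA' hc hp (Submodule.span ℝ (s : Set E)) f
  obtain ⟨u₀, hu₀⟩ := exists_forall_tendsto_apply_of_surjective_inclusionInDoubleDual hrefl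
    (Ultrafilter.of atTop) fun s => hR _ (hu s _ (huV s)).le
  refine ⟨u₀, hA'.eq_of_forall_nonneg fun v => ?_⟩
  rw [map_sub]
  refine ge_of_tendsto ((hu₀ (f - A v)).sub_const ((f - A v) v)) ?_
  -- as soon as `v ∈ s`, the Galerkin equation turns `(f - A v) (u s - v)` into a monotonicity gap
  filter_upwards [Ultrafilter.of_le atTop (eventually_ge_atTop {v})] with s hs
  have hv : v ∈ Submodule.span ℝ (s : Set E) := Submodule.subset_span (by simpa using hs)
  have hgap := hA.isMonotoneOperator hc.le (u s) v
  simp only [map_sub, sub_apply] at hgap ⊢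
  rw [hu s _ hv, hu s _ (huV s)] at hgap
  linarith

end Operators

theorem monotone_operator_bijective_continuous_inverse_general
    {X : Type*} [NormedAddCommGroup X] [NormedSpace ℝ X]
    (hrefl : Function.Surjective (inclusionInDoubleDual ℝ X))
    (A : X → (X →L[ℝ] ℝ)) (c p : ℝ) (hc : 0 < c) (hp : 1 < p)
    (hmono : ∀ u v : X, (A u - A v) (u - v) ≥ c * ‖u - v‖ ^ p)
    (hcoer : Tendsto (fun u : X => A u u / ‖u‖) (Filter.comap norm Filter.atTop) Filter.atTop)
    (hhemi : ∀ u v w : X, ContinuousOn (fun t : ℝ => A (u + t • v) w) (Set.Icc 0 1)) :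
    Function.Bijective A ∧ Continuous (Function.invFun A) := by
  have hA : IsUniformlyMonotone A c p := hmono
  have hsurj := hA.surjective hrefl hhemi hc hp hcoer
  exact ⟨⟨hA.injective hc, hsurj⟩, hA.continuous_invFun hc hp hsurj⟩

/-- Zeidler's Theorem 26.A (consequence): in a reflexive real Banach space X, a uniformly
    monotone ((A u - A v)(u - v) ≥ c‖u-v‖^p), coercive and hemicontinuous operator
    A : X → X* is bijective with continuous inverse. Reflexivity is expressed as
    surjectivity of the canonical embedding into the double dual. -/
theorem monotone_operator_bijective_continuous_inverse
    {X : Type*} [NormedAddCommGroup X] [NormedSpace ℝ X] [CompleteSpace X]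
    (hrefl : Function.Surjective (inclusionInDoubleDual ℝ X))
    (A : X → (X →L[ℝ] ℝ)) (c p : ℝ) (hc : 0 < c) (hp : 1 < p)
    (hmono : ∀ u v : X, (A u - A v) (u - v) ≥ c * ‖u - v‖ ^ p)
    (hcoer : Tendsto (fun u : X => A u u / ‖u‖) (Filter.comap norm Filter.atTop) Filter.atTop)
    (hhemi : ∀ u v w : X, ContinuousOn (fun t : ℝ => A (u + t • v) w) (Set.Icc 0 1)) :
    Function.Bijective A ∧ Continuous (Function.invFun A) :=
  monotone_operator_bijective_continuous_inverse_general hrefl A c p hc hp hmono hcoer hhemi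
end

section
/- Suppose F : Ω × ℝ → ℝ satisfies F(x,t) ≤ h(x)(1 + |t|^γ) for a.e. x ∈ Ω, all |t| ≥ T, with h ∈ L¹(Ω), 0 ≤ γ < p, and sup over Ω×[−T,T] of |F| integrable. If ‖u‖_{L^∞} ≤ k‖u‖ for all u in a normed function space X with norm ‖·‖, then for every λ ≥ 0 the functional u ↦ (1/p)‖u‖^p − λ∫_Ω F(x,u(x)) dx tends to +∞ as ‖u‖ → ∞. -/
open MeasureTheory Filter

/-- Coercivity of φ + λΦ under hypothesis (H3): if F(x,t) ≤ h(x)(1+|t|^γ) for large |t|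
    with h ∈ L¹(Ω), 0 ≤ γ < p, |F| dominated by an integrable function for |t| ≤ T, and
    ‖u‖_{L^∞} ≤ k‖u‖ on the function space X, then for every λ ≥ 0 the functional
    u ↦ (1/p)‖u‖^p − λ∫_Ω F(x,u(x)) dx tends to +∞ as ‖u‖ → ∞. -/
theorem coercivity_of_functional {N : ℕ}
    (Ω : Set (EuclideanSpace ℝ (Fin N))) (hΩm : MeasurableSet Ω)
    (hΩb : Bornology.IsBounded Ω)
    {X : Type*} [NormedAddCommGroup X] [NormedSpace ℝ X]
    (ι : X →ₗ[ℝ] (EuclideanSpace ℝ (Fin N) → ℝ))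
    (k p γ T lam : ℝ) (hk : 0 < k) (hp : 1 < p) (hγ0 : 0 ≤ γ) (hγp : γ < p)
    (hT : 0 ≤ T) (hlam : 0 ≤ lam)
    (hemb : ∀ u : X, ∀ x ∈ Ω, |ι u x| ≤ k * ‖u‖)
    (F : EuclideanSpace ℝ (Fin N) → ℝ → ℝ)
    (h : EuclideanSpace ℝ (Fin N) → ℝ) (hh : IntegrableOn h Ω)
    (hF : ∀ᵐ x ∂(volume.restrict Ω), ∀ t : ℝ, T ≤ |t| → F x t ≤ h x * (1 + |t| ^ γ))
    (hF0 : ∃ b : EuclideanSpace ℝ (Fin N) → ℝ, IntegrableOn b Ω ∧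
      ∀ᵐ x ∂(volume.restrict Ω), ∀ t : ℝ, |t| ≤ T → |F x t| ≤ b x)
    (hint : ∀ u : X, IntegrableOn (fun x => F x (ι u x)) Ω) :
    Tendsto (fun u : X => (1 / p) * ‖u‖ ^ p - lam * ∫ x in Ω, F x (ι u x))
      (Filter.comap norm Filter.atTop) Filter.atTop := by
  obtain ⟨b, hb, hbF⟩ := hF0
  set A : ℝ := ∫ x in Ω, |b x| with hA
  set B : ℝ := ∫ x in Ω, |h x| with hB
  have hA0 : 0 ≤ A := integral_nonneg fun x => abs_nonneg _
  have hB0 : 0 ≤ B := integral_nonneg fun x => abs_nonneg _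
  -- key integral bound
  have key : ∀ u : X, ∫ x in Ω, F x (ι u x) ≤ A + B * (1 + (k * ‖u‖) ^ γ) := by
    intro u
    have hC0 : (0:ℝ) ≤ 1 + (k * ‖u‖) ^ γ := by positivity
    have hmono : ∀ᵐ x ∂(volume.restrict Ω),
        F x (ι u x) ≤ |b x| + |h x| * (1 + (k * ‖u‖) ^ γ) := by
      filter_upwards [hF, hbF, ae_restrict_mem hΩm] with x hFx hbx hxΩ
      rcases le_or_gt (|ι u x|) T with hle | hlt
      · have h1 : F x (ι u x) ≤ |b x| := (le_abs_self _).trans ((hbx _ hle).trans (le_abs_self _))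
        have h2 : (0:ℝ) ≤ |h x| * (1 + (k * ‖u‖) ^ γ) := by positivity
        linarith
      · have h1 : F x (ι u x) ≤ h x * (1 + |ι u x| ^ γ) := hFx _ hlt.le
        have h2 : |ι u x| ^ γ ≤ (k * ‖u‖) ^ γ :=
          Real.rpow_le_rpow (abs_nonneg _) (hemb u x hxΩ) hγ0
        have h3 : h x * (1 + |ι u x| ^ γ) ≤ |h x| * (1 + |ι u x| ^ γ) :=
          mul_le_mul_of_nonneg_right (le_abs_self _) (by positivity)
        have h4 : |h x| * (1 + |ι u x| ^ γ) ≤ |h x| * (1 + (k * ‖u‖) ^ γ) :=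
          mul_le_mul_of_nonneg_left (by linarith) (abs_nonneg _)
        have h5 : (0:ℝ) ≤ |b x| := abs_nonneg _
        linarith
    have hint2 : IntegrableOn (fun x => |b x| + |h x| * (1 + (k * ‖u‖) ^ γ)) Ω :=
      hb.abs.add (hh.abs.mul_const _)
    calc ∫ x in Ω, F x (ι u x) ≤ ∫ x in Ω, (|b x| + |h x| * (1 + (k * ‖u‖) ^ γ)) :=
          integral_mono_ae (hint u) hint2 hmono
      _ = A + B * (1 + (k * ‖u‖) ^ γ) := by
          rw [integral_add hb.abs (hh.abs.mul_const _), integral_mul_const]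
  -- the scalar lower-bound function
  set g : ℝ → ℝ := fun r => (1 / p) * r ^ p - lam * (A + B * (1 + (k * r) ^ γ)) with hg
  have hgtend : Tendsto g atTop atTop := by
    have hpγ : 0 < p - γ := by linarith
    have h1 : Tendsto (fun r : ℝ => (1 / p) * r ^ (p - γ) - lam * B * k ^ γ - lam * (A + B))
        atTop atTop := by
      have := (tendsto_rpow_atTop hpγ).const_mul_atTop (show (0:ℝ) < 1 / p by positivity)
      exact (this.atTop_add tendsto_const_nhds).atTop_add tendsto_const_nhds
    apply tendsto_atTop_mono' atTop _ h1
    have h2 : ∀ᶠ r : ℝ in atTop, lam * B * k ^ γ ≤ (1 / p) * r ^ (p - γ) := by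
      have := (tendsto_rpow_atTop hpγ).const_mul_atTop (show (0:ℝ) < 1 / p by positivity)
      exact this.eventually_ge_atTop _
    filter_upwards [h2, eventually_ge_atTop (1:ℝ)] with r h2r hr1
    have hr0 : (0:ℝ) < r := by linarith
    have hrp : r ^ p = r ^ γ * r ^ (p - γ) := by
      rw [← Real.rpow_add hr0]; ring_nf
    have hrγ1 : (1:ℝ) ≤ r ^ γ := Real.one_le_rpow hr1 hγ0
    have hkr : (k * r) ^ γ = k ^ γ * r ^ γ := Real.mul_rpow hk.le hr0.le
    have hfac : 0 ≤ (1 / p) * r ^ (p - γ) - lam * B * k ^ γ := by linarith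
    have hmul : ((1 / p) * r ^ (p - γ) - lam * B * k ^ γ) * 1 ≤
        ((1 / p) * r ^ (p - γ) - lam * B * k ^ γ) * r ^ γ :=
      mul_le_mul_of_nonneg_left hrγ1 hfac
    simp only [hg]
    rw [hkr, hrp]
    nlinarith [hmul]
  -- conclude
  have hcomp : Tendsto (fun u : X => g ‖u‖) (Filter.comap norm Filter.atTop) atTop :=
    hgtend.comp tendsto_comap
  apply tendsto_atTop_mono _ hcomp
  intro u
  simp only [hg]
  have := key u
  nlinarith [key u, mul_le_mul_of_nonneg_left (key u) hlam]
end
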